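/- If two real symmetric matrices L and L' are cospectral with eigenbases related at nodes i and j by φ_k(i)² = φ'_k(j)² for all k, then the heat kernel signatures satisfy s_i(t) = s'_j(t) for all t ≥ 0. Conversely, if s_i(t) = s_j(t) for all t ≥ 0 (same matrix L with distinct eigenvalues λ_1 < ... < λ_n), then φ_k(i)² = φ_k(j)² for every k. -/

import Mathlib

/-! For the converse, evaluating `∑ₖ e^{-tλₖ} (φₖ(i)² - φₖ(j)²) = 0` at `t = 0, 1, …, n - 1`
gives a Vandermonde system in the distinct nodes `e^{-λₖ}`, whose only solution is zero. -/

open Finset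

theorem eq_zero_of_forall_nat_sum_exp_mul_eq_zero {n : ℕ} {lam c : Fin n → ℝ}
    (hlam : Function.Injective lam) (h : ∀ m : ℕ, ∑ k, Real.exp (-m * lam k) * c k = 0) :
    c = 0 := by
  have hnodes : Function.Injective fun k => Real.exp (-lam k) :=
    Real.exp_injective.comp (neg_injective.comp hlam)
  refine Matrix.eq_zero_of_forall_pow_sum_mul_pow_eq_zero hnodes fun m => ?_
  rw [← h m]
  refine sum_congr rfl fun k _ => ?_
  rw [mul_comm, ← Real.exp_nat_mul, neg_mul, mul_neg]

theorem eq_of_forall_nonneg_sum_exp_mul_eq {n : ℕ} {lam a b : Fin n → ℝ}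
    (hlam : Function.Injective lam)
    (h : ∀ t : ℝ, 0 ≤ t → ∑ k, Real.exp (-t * lam k) * a k = ∑ k, Real.exp (-t * lam k) * b k) :
    a = b := by
  refine sub_eq_zero.1 (eq_zero_of_forall_nat_sum_exp_mul_eq_zero hlam fun m => ?_)
  simp only [Pi.sub_apply, mul_sub, sum_sub_distrib, h m m.cast_nonneg, sub_self]

theorem hks_cospectral_and_converse_general
    (n : ℕ)
    (lam : Fin n → ℝ) (phi : Fin n → Fin n → ℝ)
    (i j : Fin n) :
    ((∀ (L' : Matrix (Fin n) (Fin n) ℝ) (phi' : Fin n → Fin n → ℝ),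
        L'.IsSymm →
        (∀ k, L'.mulVec (phi' k) = lam k • phi' k) →
        (∀ k l, dotProduct (phi' k) (phi' l) = if k = l then 1 else 0) →
        (∀ k, (phi k i) ^ 2 = (phi' k j) ^ 2) →
        ∀ t : ℝ, 0 ≤ t →
          ∑ k, Real.exp (-t * lam k) * (phi k i) ^ 2 =
            ∑ k, Real.exp (-t * lam k) * (phi' k j) ^ 2)) ∧
    (StrictMono lam →
      (∀ t : ℝ, 0 ≤ t →
        ∑ k, Real.exp (-t * lam k) * (phi k i) ^ 2 =
          ∑ k, Real.exp (-t * lam k) * (phi k j) ^ 2) →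
      ∀ k, (phi k i) ^ 2 = (phi k j) ^ 2) := by
  refine ⟨fun L' phi' _ _ _ hsq t _ => sum_congr rfl fun k _ => by rw [hsq k], ?_⟩
  intro hmono hs
  exact congrFun (eq_of_forall_nonneg_sum_exp_mul_eq (a := fun k => phi k i ^ 2)
    (b := fun k => phi k j ^ 2) hmono.injective hs)

/-- (1) If `L'` is cospectral with `L` and the eigenbases satisfy
`φ_k(i)² = φ'_k(j)²` for all `k`, then `s_i(t) = s'_j(t)` for all `t ≥ 0`.
(2) Conversely, for the same matrix `L` with pairwise distinct eigenvalues,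
`s_i(t) = s_j(t)` for all `t ≥ 0` implies `φ_k(i)² = φ_k(j)²` for every `k`. -/
theorem hks_cospectral_and_converse
    (n : ℕ) (L : Matrix (Fin n) (Fin n) ℝ) (hL : L.IsSymm)
    (lam : Fin n → ℝ) (phi : Fin n → Fin n → ℝ)
    (heig : ∀ k, L.mulVec (phi k) = lam k • phi k)
    (horth : ∀ k l, dotProduct (phi k) (phi l) = if k = l then 1 else 0)
    (i j : Fin n) :
    ((∀ (L' : Matrix (Fin n) (Fin n) ℝ) (phi' : Fin n → Fin n → ℝ),
        L'.IsSymm →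
        (∀ k, L'.mulVec (phi' k) = lam k • phi' k) →
        (∀ k l, dotProduct (phi' k) (phi' l) = if k = l then 1 else 0) →
        (∀ k, (phi k i) ^ 2 = (phi' k j) ^ 2) →
        ∀ t : ℝ, 0 ≤ t →
          ∑ k, Real.exp (-t * lam k) * (phi k i) ^ 2 =
            ∑ k, Real.exp (-t * lam k) * (phi' k j) ^ 2)) ∧
    (StrictMono lam →
      (∀ t : ℝ, 0 ≤ t →
        ∑ k, Real.exp (-t * lam k) * (phi k i) ^ 2 =
          ∑ k, Real.exp (-t * lam k) * (phi k j) ^ 2) →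
      ∀ k, (phi k i) ^ 2 = (phi k j) ^ 2) :=
  hks_cospectral_and_converse_general n lam phi i j
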